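/- Let R₁, R₂ > 1 and let Aᵢ = {z ∈ ℂ : 1 < |z| < Rᵢ} for i = 1, 2 be open annuli. If there exists a holomorphic map f defined on A₁ (i.e. f : ℂ → ℂ differentiable at every point of A₁) that maps A₁ bijectively onto A₂, then R₁ = R₂. (Two round annuli with inner radius 1 are conformally equivalent if and only if their outer radii agree; this is the conformal rigidity of annuli underlying the normalization A_F = {1 < |z| < e^{R_F}}.) -/

import Mathlib

/-!
A holomorphic bijection `f` from `A₁` onto `A₂` is proper, so at each edge of `A₁` the modulus
`‖f‖` tends to `1` or to `R₂`: thin annuli are connected, so each edge of `A₁` goes to a single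
edge of `A₂`, and the maximum principle shows that the two edges go to different ones. Replacing
`f` by `R₂ / f` if needed, the inner edge goes to the inner edge. With `s = log R₂ / log R₁`, the
maximum principle for `f ^ p / z ^ q` with `R₂ ^ p ≤ R₁ ^ q`, and for the same construction after
the reflections `z ↦ R₁ / z`, `w ↦ R₂ / w`, gives `log ‖f z‖ = s log ‖z‖` on `A₁`. Hence
`z f' = s f`, so `f (r e^{iθ}) = e^{isθ} f r`: periodicity in `θ` makes `s` an integer, and
injectivity on the circle then forces `s = 1`.
-/

open Set Filter Topology Metric Function

def annulus (a b : ℝ) : Set ℂ := {z | a < ‖z‖ ∧ ‖z‖ < b}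

noncomputable def innerEdge (a : ℝ) : Filter ℂ := comap (‖·‖) (𝓝[>] a)

noncomputable def outerEdge (b : ℝ) : Filter ℂ := comap (‖·‖) (𝓝[<] b)

theorem ne_zero_of_mem_annulus {a b : ℝ} (ha : 0 ≤ a) {z : ℂ} (hz : z ∈ annulus a b) : z ≠ 0 :=
  norm_pos_iff.1 (ha.trans_lt hz.1)

theorem annulus_eq_preimage (a b : ℝ) : annulus a b = (‖·‖) ⁻¹' Ioo a b := rfl

theorem isOpen_annulus (a b : ℝ) : IsOpen (annulus a b) :=
  isOpen_Ioo.preimage continuous_norm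

theorem isPreconnected_annulus (a b : ℝ) : IsPreconnected (annulus a b) := by
  rcases lt_or_ge a 0 with ha | ha
  · have : annulus a b = ball 0 b := by
      ext z; simp [annulus, ha.trans_le (norm_nonneg z)]
    exact this ▸ (convex_ball 0 b).isPreconnected
  · have : annulus a b = (fun p : ℝ × ℝ => circleMap 0 p.1 p.2) '' (Ioo a b ×ˢ univ) := by
      ext z
      constructor
      · intro hz
        refine ⟨(‖z‖, z.arg), ⟨hz, trivial⟩, ?_⟩
        simp [circleMap]
      · rintro ⟨⟨r, θ⟩, ⟨hr, -⟩, rfl⟩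
        simpa [annulus, abs_of_pos (ha.trans_lt hr.1)] using hr
    rw [this]
    exact (isPreconnected_Ioo.prod isPreconnected_univ).image _
      (by simp only [circleMap_zero]; fun_prop : Continuous _).continuousOn

theorem sphere_subset_annulus {a b r : ℝ} (ha : a < r) (hb : r < b) :
    sphere 0 r ⊆ annulus a b := fun z hz => by
  rw [mem_sphere_zero_iff_norm] at hz
  exact ⟨hz ▸ ha, hz ▸ hb⟩

theorem tendsto_norm_innerEdge (a : ℝ) : Tendsto (‖·‖) (innerEdge a) (𝓝 a) :=
  tendsto_comap.mono_right nhdsWithin_le_nhds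

theorem tendsto_norm_outerEdge (b : ℝ) : Tendsto (‖·‖) (outerEdge b) (𝓝 b) :=
  tendsto_comap.mono_right nhdsWithin_le_nhds

theorem innerEdge_basis (a : ℝ) : (innerEdge a).HasBasis (a < ·) (annulus a) :=
  (nhdsGT_basis a).comap _

theorem outerEdge_basis (b : ℝ) : (outerEdge b).HasBasis (· < b) (annulus · b) :=
  (nhdsLT_basis b).comap _

theorem annulus_mem_innerEdge {a b : ℝ} (hab : a < b) : annulus a b ∈ innerEdge a :=
  preimage_mem_comap (Ioo_mem_nhdsGT hab)

theorem annulus_mem_outerEdge {a b : ℝ} (hab : a < b) : annulus a b ∈ outerEdge b :=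
  preimage_mem_comap (Ioo_mem_nhdsLT hab)

theorem frontier_annulus_subset (a b : ℝ) :
    frontier (annulus a b) ⊆ {z | ‖z‖ = a ∨ ‖z‖ = b} := by
  rcases lt_or_ge a b with hab | hba
  · refine ((continuous_norm (E := ℂ)).frontier_preimage_subset (Ioo a b)).trans ?_
    rw [frontier_Ioo hab]
    exact fun z hz => hz
  · simp [annulus_eq_preimage, Ioo_eq_empty_of_le hba]

theorem closure_annulus_subset (a b : ℝ) :
    closure (annulus a b) ⊆ {z | a ≤ ‖z‖ ∧ ‖z‖ ≤ b} :=
  ((continuous_norm (E := ℂ)).closure_preimage_subset (Ioo a b)).trans <|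
    preimage_mono (closure_minimal Ioo_subset_Icc_self isClosed_Icc)

theorem norm_le_of_forall_norm_eq_le {g : ℂ → ℂ} {r₀ r₁ C : ℝ}
    (hg : DifferentiableOn ℂ g {z | r₀ ≤ ‖z‖ ∧ ‖z‖ ≤ r₁})
    (hC : ∀ z, ‖z‖ = r₀ ∨ ‖z‖ = r₁ → ‖g z‖ ≤ C) {z : ℂ} (hz : z ∈ annulus r₀ r₁) :
    ‖g z‖ ≤ C := by
  have hcl := closure_annulus_subset r₀ r₁
  refine Complex.norm_le_of_forall_mem_frontier_norm_le ?_ ?_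
    (fun w hw => hC w (frontier_annulus_subset r₀ r₁ hw)) (subset_closure hz)
  · exact (isBounded_ball (x := 0) (r := r₁)).subset fun w hw => by simpa using hw.2
  · exact ⟨hg.mono fun w hw => ⟨hw.1.le, hw.2.le⟩, (hg.mono hcl).continuousOn⟩

theorem norm_le_of_eventually_norm_lt {a b M : ℝ} {g : ℂ → ℂ}
    (hg : DifferentiableOn ℂ g (annulus a b))
    (hedge : ∀ c > M, ∀ᶠ z in innerEdge a ⊔ outerEdge b, ‖g z‖ < c) :
    ∀ z ∈ annulus a b, ‖g z‖ ≤ M := by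
  intro z hz
  refine le_of_forall_gt_imp_ge_of_dense fun c hc => ?_
  obtain ⟨hin, hout⟩ := eventually_sup.1 (hedge c hc)
  obtain ⟨r₀, hr₀, ha, hr₀z⟩ :=
    ((eventually_comap.1 hin).and (Ioo_mem_nhdsGT hz.1)).exists
  obtain ⟨r₁, hr₁, hzr₁, hb⟩ :=
    ((eventually_comap.1 hout).and (Ioo_mem_nhdsLT hz.2)).exists
  refine norm_le_of_forall_norm_eq_le (hg.mono fun w hw => ⟨ha.trans_le hw.1, hw.2.trans_lt hb⟩)
    (fun w hw => ?_) ⟨hr₀z, hzr₁⟩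
  rcases hw with hw | hw
  exacts [(hr₀ w hw).le, (hr₁ w hw).le]

theorem Filter.HasBasis.tendsto_or_tendsto_of_gap {X ι : Type*} [TopologicalSpace X]
    {L : Filter X} {p : ι → Prop} {s : ι → Set X} (hL : L.HasBasis p s)
    (hs : ∀ i, p i → IsPreconnected (s i)) {u : X → ℝ} {S : Set X} (hS : S ∈ L)
    (hu : ContinuousOn u S) {a b : ℝ} (hab : a < b) (hmem : ∀ᶠ x in L, u x ∈ Ioo a b)
    (hgap : ∀ ε > 0, ∀ᶠ x in L, u x < a + ε ∨ b - ε < u x) :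
    Tendsto u L (𝓝 a) ∨ Tendsto u L (𝓝 b) := by
  have hne : ∀ᶠ x in L, u x ∈ Iio ((a + b) / 2) ∪ Ioi ((a + b) / 2) :=
    (hgap ((b - a) / 2) (by linarith)).mono fun x hx => by
      rcases hx with hx | hx
      exacts [Or.inl (by simp only [mem_Iio]; linarith), Or.inr (by simp only [mem_Ioi]; linarith)]
  obtain ⟨i, hi, hsub⟩ := hL.mem_iff.1 (inter_mem hS hne)
  have hsi : s i ∈ L := hL.mem_of_mem hi
  rcases ((hs i hi).image u (hu.mono fun x hx => (hsub hx).1)).subset_or_subset isOpen_Iio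
    isOpen_Ioi (Iio_disjoint_Ioi_of_le le_rfl) (image_subset_iff.2 fun x hx => (hsub hx).2)
    with hlow | hhigh
  · refine Or.inl (tendsto_order.2 ⟨fun c hc => hmem.mono fun x hx => hc.trans hx.1,
      fun c hc => ?_⟩)
    filter_upwards [hgap (min (c - a) ((b - a) / 2)) (lt_min (by linarith) (by linarith)), hsi]
      with x hx hxs
    have hm : u x < (a + b) / 2 := hlow (mem_image_of_mem u hxs)
    have := min_le_left (c - a) ((b - a) / 2)
    have := min_le_right (c - a) ((b - a) / 2)
    rcases hx with hx | hx <;> linarith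
  · refine Or.inr (tendsto_order.2 ⟨fun c hc => ?_,
      fun c hc => hmem.mono fun x hx => hx.2.trans hc⟩)
    filter_upwards [hgap (min (b - c) ((b - a) / 2)) (lt_min (by linarith) (by linarith)), hsi]
      with x hx hxs
    have hm : (a + b) / 2 < u x := hhigh (mem_image_of_mem u hxs)
    have := min_le_left (b - c) ((b - a) / 2)
    have := min_le_right (b - c) ((b - a) / 2)
    rcases hx with hx | hx <;> linarith

theorem DifferentiableOn.isOpen_image_of_injOn {f : ℂ → ℂ} {U : Set ℂ}
    (hf : DifferentiableOn ℂ f U) (hU : IsOpen U) (hUc : IsPreconnected U) (hUn : U.Nontrivial)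
    (hinj : InjOn f U) : ∀ s ⊆ U, IsOpen s → IsOpen (f '' s) := by
  refine ((hf.analyticOnNhd hU).is_constant_or_isOpen hUc).resolve_left ?_
  rintro ⟨w, hw⟩
  obtain ⟨x, hx, y, hy, hxy⟩ := hUn
  exact hxy (hinj hx hy ((hw x hx).trans (hw y hy).symm))

theorem Set.BijOn.continuousOn_invFunOn {X Y : Type*} [TopologicalSpace X] [TopologicalSpace Y]
    [Nonempty X] {f : X → Y} {s : Set X} {t : Set Y} (hbij : BijOn f s t) (hs : IsOpen s)
    (ht : IsOpen t) (hopen : ∀ u ⊆ s, IsOpen u → IsOpen (f '' u)) :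
    ContinuousOn (invFunOn f s) t := by
  refine (continuousOn_open_iff ht).2 fun V hV => ?_
  have : t ∩ invFunOn f s ⁻¹' V = f '' (s ∩ V) := by
    ext w
    constructor
    · rintro ⟨hw, hwV⟩
      exact ⟨_, ⟨hbij.surjOn.mapsTo_invFunOn hw, hwV⟩, hbij.invOn_invFunOn.2 hw⟩
    · rintro ⟨z, ⟨hz, hzV⟩, rfl⟩
      exact ⟨hbij.mapsTo hz, by simpa [hbij.invOn_invFunOn.1 hz] using hzV⟩
  rw [this]
  exact hopen _ inter_subset_left (hs.inter hV)

theorem IsCompact.eventually_notMem_edges {P : Set ℂ} (hP : IsCompact P) {a b : ℝ}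
    (hPab : P ⊆ annulus a b) : ∀ᶠ z in innerEdge a ⊔ outerEdge b, z ∉ P := by
  have hK : IsClosed ((‖·‖) '' P) := (hP.image continuous_norm).isClosed
  have hnot : ∀ r ∉ (‖·‖) '' P, ∀ z : ℂ, ‖z‖ = r → z ∉ P :=
    fun r hr z hz hzP => hr ⟨z, hzP, hz⟩
  have ha : a ∉ (‖·‖) '' P := by rintro ⟨z, hz, rfl⟩; exact lt_irrefl _ (hPab hz).1
  have hb : b ∉ (‖·‖) '' P := by rintro ⟨z, hz, rfl⟩; exact lt_irrefl _ (hPab hz).2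
  exact eventually_sup.2
    ⟨eventually_comap.2 (mem_nhdsWithin_of_mem_nhds (mem_of_superset (hK.compl_mem_nhds ha) hnot)),
      eventually_comap.2 (mem_nhdsWithin_of_mem_nhds (mem_of_superset (hK.compl_mem_nhds hb) hnot))⟩

/-- Properness of `f`: its inverse is continuous by the open mapping theorem, so it maps the
compact shell `1 + ε ≤ ‖w‖ ≤ R₂ - ε` to a compact subset of `annulus 1 R₁`. -/
theorem eventually_norm_lt_or_gt_of_bijOn {R₁ R₂ : ℝ} (hR₁ : 1 < R₁) {f : ℂ → ℂ}
    (hf : DifferentiableOn ℂ f (annulus 1 R₁)) (hbij : BijOn f (annulus 1 R₁) (annulus 1 R₂))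
    {ε : ℝ} (hε : 0 < ε) :
    ∀ᶠ z in innerEdge 1 ⊔ outerEdge R₁, ‖f z‖ < 1 + ε ∨ R₂ - ε < ‖f z‖ := by
  obtain ⟨r, hr1, hrR⟩ := exists_between hR₁
  have hr0 : 0 < r := by linarith
  have hnt : (annulus 1 R₁).Nontrivial := by
    refine ⟨r, sphere_subset_annulus hr1 hrR ?_, -r, sphere_subset_annulus hr1 hrR ?_, ?_⟩
    · simp [abs_of_pos hr0]
    · simp [abs_of_pos hr0]
    · exact fun h => by
        linarith [congrArg Complex.re h, Complex.neg_re (r : ℂ), Complex.ofReal_re r]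
  have hg := hbij.continuousOn_invFunOn (isOpen_annulus 1 R₁) (isOpen_annulus 1 R₂)
    (hf.isOpen_image_of_injOn (isOpen_annulus 1 R₁) (isPreconnected_annulus 1 R₁) hnt hbij.injOn)
  set K : Set ℂ := {w | 1 + ε ≤ ‖w‖ ∧ ‖w‖ ≤ R₂ - ε}
  have hK : IsCompact K := (isCompact_closedBall 0 (R₂ - ε)).of_isClosed_subset
    (isClosed_Icc.preimage continuous_norm) fun w hw => mem_closedBall_zero_iff.2 hw.2
  have hKA : K ⊆ annulus 1 R₂ := fun w hw => ⟨by linarith [hw.1], by linarith [hw.2]⟩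
  have hP := (hK.image_of_continuousOn (hg.mono hKA)).eventually_notMem_edges
    ((hbij.surjOn.mapsTo_invFunOn.mono_left hKA).image_subset)
  filter_upwards [hP, mem_sup.2 ⟨annulus_mem_innerEdge hR₁, annulus_mem_outerEdge hR₁⟩]
    with z hzP hz
  by_contra! h
  exact hzP ⟨f z, h, hbij.invOn_invFunOn.1 hz⟩

theorem tendsto_norm_edges_of_bijOn {R₁ R₂ : ℝ} (hR₁ : 1 < R₁) (hR₂ : 1 < R₂) {f : ℂ → ℂ}
    (hf : DifferentiableOn ℂ f (annulus 1 R₁)) (hbij : BijOn f (annulus 1 R₁) (annulus 1 R₂)) :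
    (Tendsto (‖f ·‖) (innerEdge 1) (𝓝 1) ∨ Tendsto (‖f ·‖) (innerEdge 1) (𝓝 R₂)) ∧
      (Tendsto (‖f ·‖) (outerEdge R₁) (𝓝 1) ∨ Tendsto (‖f ·‖) (outerEdge R₁) (𝓝 R₂)) := by
  have hcont : ContinuousOn (‖f ·‖) (annulus 1 R₁) := hf.continuousOn.norm
  have hgap := fun ε (hε : 0 < ε) =>
    eventually_sup.1 (eventually_norm_lt_or_gt_of_bijOn hR₁ hf hbij hε)
  have hin := annulus_mem_innerEdge hR₁
  have hout := annulus_mem_outerEdge hR₁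
  exact ⟨(innerEdge_basis 1).tendsto_or_tendsto_of_gap (fun _ _ => isPreconnected_annulus _ _)
      hin hcont hR₂ (mem_of_superset hin fun z hz => hbij.mapsTo hz) fun ε hε => (hgap ε hε).1,
    (outerEdge_basis R₁).tendsto_or_tendsto_of_gap (fun _ _ => isPreconnected_annulus _ _)
      hout hcont hR₂ (mem_of_superset hout fun z hz => hbij.mapsTo hz) fun ε hε => (hgap ε hε).2⟩

theorem norm_ofReal_div {R : ℝ} (hR : 0 ≤ R) (w : ℂ) : ‖(R : ℂ) / w‖ = R / ‖w‖ := by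
  rw [norm_div, Complex.norm_of_nonneg hR]

theorem tendsto_norm_ofReal_div {l : Filter ℂ} {g : ℂ → ℂ} {R x : ℝ} (hR : 0 ≤ R) (hx : x ≠ 0)
    (h : Tendsto (‖g ·‖) l (𝓝 x)) : Tendsto (fun z => ‖(R : ℂ) / g z‖) l (𝓝 (R / x)) := by
  have hlim : Tendsto (fun z => R / ‖g z‖) l (𝓝 (R / x)) := tendsto_const_nhds.div h hx
  simpa only [norm_ofReal_div hR] using hlim

theorem div_mem_annulus {R : ℝ} {z : ℂ} (hz : z ∈ annulus 1 R) : (R : ℂ) / z ∈ annulus 1 R := by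
  have hz0 : 0 < ‖z‖ := one_pos.trans hz.1
  show 1 < _ ∧ _ < R
  rw [norm_ofReal_div (hz0.trans hz.2).le, one_lt_div hz0, div_lt_iff₀ hz0]
  exact ⟨hz.2, lt_mul_of_one_lt_right (hz0.trans hz.2) hz.1⟩

theorem bijOn_div_annulus (R : ℝ) :
    BijOn (fun z : ℂ => (R : ℂ) / z) (annulus 1 R) (annulus 1 R) := by
  have hinv : ∀ z ∈ annulus 1 R, (R : ℂ) / ((R : ℂ) / z) = z := fun z hz =>
    div_div_cancel₀ (Complex.ofReal_ne_zero.2 (one_pos.trans (hz.1.trans hz.2)).ne')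
  exact InvOn.bijOn ⟨hinv, hinv⟩ (fun _ => div_mem_annulus) (fun _ => div_mem_annulus)

theorem tendsto_div_innerEdge {R : ℝ} (hR : 0 < R) :
    Tendsto (fun z : ℂ => (R : ℂ) / z) (innerEdge 1) (outerEdge R) := by
  have hcont : Tendsto (R / ·) (𝓝 (1 : ℝ)) (𝓝 (R / 1)) :=
    tendsto_const_nhds.div tendsto_id one_ne_zero
  rw [div_one] at hcont
  have hdiv : Tendsto (R / ·) (𝓝[>] (1 : ℝ)) (𝓝[<] R) := tendsto_nhdsWithin_iff.2
    ⟨hcont.mono_left nhdsWithin_le_nhds,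
      eventually_nhdsWithin_of_forall fun r hr => div_lt_self hR hr⟩
  refine tendsto_comap_iff.2 ?_
  simpa [innerEdge, Function.comp_def, abs_of_pos hR] using
    hdiv.comp (tendsto_comap (f := (‖·‖)))

theorem mul_le_mul_of_forall_nat_mul_le {a b x y : ℝ} (ha : 0 ≤ a) (hb : 0 < b) (hy : 0 ≤ y)
    (h : ∀ p q : ℕ, p * a ≤ q * b → p * x ≤ q * y) : x * b ≤ a * y := by
  have key : ∀ p : ℕ, 1 ≤ p → x * b ≤ a * y + b * y / p := by
    intro p hp
    have hp' : (0 : ℝ) < p := by exact_mod_cast hp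
    have hq : p * a / b ≤ ⌈p * a / b⌉₊ := Nat.le_ceil _
    have hq' : (⌈p * a / b⌉₊ : ℝ) < p * a / b + 1 := Nat.ceil_lt_add_one (by positivity)
    have hpx := (h p ⌈p * a / b⌉₊ (by rwa [div_le_iff₀ hb] at hq)).trans
      (mul_le_mul_of_nonneg_right hq'.le hy)
    refine le_of_mul_le_mul_left ?_ hp'
    calc p * (x * b) = (p * x) * b := by ring
      _ ≤ (p * a / b + 1) * y * b := mul_le_mul_of_nonneg_right hpx hb.le
      _ = p * (a * y + b * y / p) := by field_simp
  refine ge_of_tendsto ?_ (eventually_atTop.2 ⟨1, key⟩)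
  simpa using (tendsto_const_div_atTop_nhds_zero_nat (b * y)).const_add (a * y)

section LogNorm

variable {R₁ R₂ : ℝ} (hR₁ : 1 < R₁) {f : ℂ → ℂ} (hf : DifferentiableOn ℂ f (annulus 1 R₁))
  (hmaps : MapsTo f (annulus 1 R₁) (annulus 1 R₂))
include hR₁ hf hmaps

/-- Maximum principle for `f ^ p / z ^ q`. -/
theorem norm_pow_le_norm_pow_of_tendsto_innerEdge (hin : Tendsto (‖f ·‖) (innerEdge 1) (𝓝 1))
    {p q : ℕ} (hpq : R₂ ^ p ≤ R₁ ^ q) : ∀ z ∈ annulus 1 R₁, ‖f z‖ ^ p ≤ ‖z‖ ^ q := by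
  intro z hz
  have hR₁0 : 0 < R₁ := one_pos.trans hR₁
  have hnorm : ∀ w : ℂ, ‖f w ^ p / w ^ q‖ = ‖f w‖ ^ p / ‖w‖ ^ q := by simp [norm_pow]
  have hg : DifferentiableOn ℂ (fun w => f w ^ p / w ^ q) (annulus 1 R₁) :=
    (hf.pow p).div (differentiableOn_id.pow q) fun w hw =>
      pow_ne_zero q (ne_zero_of_mem_annulus zero_le_one hw)
  have hbound := norm_le_of_eventually_norm_lt hg (M := 1) (fun c hc => eventually_sup.2 ⟨?_, ?_⟩)
    z hz
  · rwa [hnorm, div_le_one (pow_pos (one_pos.trans hz.1) q)] at hbound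
  · simp only [hnorm]
    exact ((hin.pow p).div ((tendsto_norm_innerEdge 1).pow q) (by simp)).eventually_lt_const
      (by simpa using hc)
  · have hlim : R₂ ^ p / R₁ ^ q < c :=
      ((div_le_one (pow_pos hR₁0 q)).2 hpq).trans_lt hc
    filter_upwards [(tendsto_const_nhds.div ((tendsto_norm_outerEdge R₁).pow q)
      (pow_pos hR₁0 q).ne').eventually_lt_const hlim, annulus_mem_outerEdge hR₁] with w hw hwA
    calc ‖f w ^ p / w ^ q‖ = ‖f w‖ ^ p / ‖w‖ ^ q := hnorm w
      _ ≤ R₂ ^ p / ‖w‖ ^ q := by gcongr; exact (hmaps hwA).2.le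
      _ < c := hw

theorem log_norm_mul_log_le (hR₂ : 1 < R₂) (hin : Tendsto (‖f ·‖) (innerEdge 1) (𝓝 1)) :
    ∀ z ∈ annulus 1 R₁, Real.log ‖f z‖ * Real.log R₁ ≤ Real.log R₂ * Real.log ‖z‖ := by
  intro z hz
  refine mul_le_mul_of_forall_nat_mul_le (Real.log_nonneg hR₂.le) (Real.log_pos hR₁)
    (Real.log_nonneg hz.1.le) fun p q hpq => ?_
  have hfz : 0 < ‖f z‖ := one_pos.trans (hmaps hz).1
  rw [← Real.log_pow, ← Real.log_pow] at hpq ⊢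
  exact Real.log_le_log (pow_pos hfz p) <| norm_pow_le_norm_pow_of_tendsto_innerEdge hR₁ hf hmaps
    hin ((Real.log_le_log_iff (by positivity) (by positivity)).1 hpq) z hz

/-- The lower bound is the upper bound for `z ↦ R₂ / f (R₁ / z)`, which swaps the edges. -/
theorem log_mul_log_norm_le (hR₂ : 1 < R₂) (hout : Tendsto (‖f ·‖) (outerEdge R₁) (𝓝 R₂)) :
    ∀ z ∈ annulus 1 R₁, Real.log R₂ * Real.log ‖z‖ ≤ Real.log ‖f z‖ * Real.log R₁ := by
  have hR₂0 : 0 < R₂ := one_pos.trans hR₂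
  have hf0 : ∀ z ∈ annulus 1 R₁, f z ≠ 0 := fun z hz =>
    ne_zero_of_mem_annulus zero_le_one (hmaps hz)
  set F : ℂ → ℂ := fun z => (R₂ : ℂ) / f (R₁ / z)
  have hFd : DifferentiableOn ℂ F (annulus 1 R₁) := by
    refine (differentiableOn_const _).div
      (hf.comp ((differentiableOn_const _).div differentiableOn_id
        fun _ => ne_zero_of_mem_annulus zero_le_one) fun _ => div_mem_annulus)
      fun z hz => hf0 _ (div_mem_annulus hz)
  have hFin : Tendsto (‖F ·‖) (innerEdge 1) (𝓝 1) := by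
    simpa [F, hR₂0.ne'] using tendsto_norm_ofReal_div hR₂0.le hR₂0.ne'
      (hout.comp (tendsto_div_innerEdge (one_pos.trans hR₁)))
  intro z hz
  have h := log_norm_mul_log_le hR₁ hFd (fun _ hw => div_mem_annulus (hmaps (div_mem_annulus hw)))
    hR₂ hFin _ (div_mem_annulus hz)
  have hz0 : 0 < ‖z‖ := one_pos.trans hz.1
  have hR₁0 : 0 < R₁ := one_pos.trans hR₁
  simp only [F] at h
  rw [div_div_cancel₀ (Complex.ofReal_ne_zero.2 hR₁0.ne'), norm_ofReal_div hR₂0.le,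
    norm_ofReal_div hR₁0.le, Real.log_div hR₂0.ne' (one_pos.trans (hmaps hz).1).ne',
    Real.log_div hR₁0.ne' hz0.ne'] at h
  linarith

end LogNorm

theorem HasDerivAt.eq_zero_of_eventually_re_eq {φ : ℂ → ℂ} {φ' z₀ : ℂ} {c : ℝ}
    (hφ : HasDerivAt φ φ' z₀) (hre : ∀ᶠ z in 𝓝 z₀, (φ z).re = c) : φ' = 0 := by
  have hdir : ∀ v : ℂ, (φ' * v).re = 0 := by
    intro v
    have hline : HasDerivAt (fun w : ℂ => z₀ + w * v) v ((0 : ℝ) : ℂ) := by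
      simpa using ((hasDerivAt_id ((0 : ℝ) : ℂ)).mul_const v).const_add z₀
    have hcomp := (HasDerivAt.comp_of_eq _ hφ hline (by simp)).real_of_complex
    have hev : (fun t : ℝ => (φ (z₀ + t * v)).re) =ᶠ[𝓝 0] fun _ => c :=
      ((Continuous.tendsto' (by fun_prop) 0 z₀ (by simp)).eventually hre)
    exact hcomp.unique ((hasDerivAt_const (0 : ℝ) c).congr_of_eventuallyEq hev)
  apply Complex.ext
  · simpa using hdir 1
  · simpa using hdir Complex.I

theorem mul_deriv_eq_of_log_norm_eventuallyEq {f : ℂ → ℂ} {z₀ : ℂ} (hf : DifferentiableAt ℂ f z₀)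
    (hf0 : f z₀ ≠ 0) (hz₀ : z₀ ≠ 0) {s : ℝ}
    (hlog : ∀ᶠ z in 𝓝 z₀, Real.log ‖f z‖ = s * Real.log ‖z‖) :
    z₀ * deriv f z₀ = s * f z₀ := by
  set φ : ℂ → ℂ := fun z => Complex.log (f z / f z₀) - s * Complex.log (z / z₀)
  have hφ : HasDerivAt φ (deriv f z₀ / f z₀ - s * (1 / z₀)) z₀ := by
    have h1 := (hf.hasDerivAt.div_const (f z₀)).clog (by simp [hf0])
    have h2 := ((hasDerivAt_id z₀).div_const z₀).clog (by simp [hz₀])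
    rw [div_self hf0, div_one] at h1
    simp only [id, div_self hz₀, div_one] at h2
    exact h1.sub (h2.const_mul (s : ℂ))
  have hre : ∀ᶠ z in 𝓝 z₀, (φ z).re = 0 := by
    filter_upwards [hlog, hf.continuousAt.eventually_ne hf0, eventually_ne_nhds hz₀]
      with z hz hfz hz0
    simp only [φ, Complex.sub_re, Complex.re_ofReal_mul, Complex.log_re, norm_div,
      Real.log_div (norm_ne_zero_iff.2 hfz) (norm_ne_zero_iff.2 hf0),
      Real.log_div (norm_ne_zero_iff.2 hz0) (norm_ne_zero_iff.2 hz₀), hz, hlog.self_of_nhds]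
    ring
  have h := hφ.eq_zero_of_eventually_re_eq hre
  field_simp at h
  linear_combination h

theorem circleMap_eq_of_mul_deriv_eq {f : ℂ → ℂ} {r : ℝ} {s : ℂ}
    (hf : ∀ θ, DifferentiableAt ℂ f (circleMap 0 r θ))
    (hs : ∀ θ, circleMap 0 r θ * deriv f (circleMap 0 r θ) = s * f (circleMap 0 r θ)) (θ : ℝ) :
    f (circleMap 0 r θ) = Complex.exp (s * θ * Complex.I) * f (circleMap 0 r 0) := by
  set G : ℝ → ℂ := fun t => Complex.exp (-(s * t * Complex.I)) * f (circleMap 0 r t)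
  have hG : ∀ t, HasDerivAt G 0 t := by
    intro t
    have h1 := (hf t).hasDerivAt.comp t (hasDerivAt_circleMap 0 r t)
    have h2 := (((hasDerivAt_id t).ofReal_comp.const_mul s).mul_const Complex.I).neg.cexp
    simp only [Pi.neg_apply, id, Complex.ofReal_one, mul_one] at h2
    refine (h2.mul h1).congr_deriv ?_
    rw [Function.comp_apply]
    linear_combination (Complex.exp (-(s * t * Complex.I)) * Complex.I) * hs t
  have hconst := is_const_of_deriv_eq_zero (fun t => (hG t).differentiableAt)
    (fun t => (hG t).deriv) θ 0
  simp only [G, Complex.ofReal_zero, mul_zero, zero_mul, neg_zero, Complex.exp_zero, one_mul]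
    at hconst
  rw [← hconst, ← mul_assoc, ← Complex.exp_add, add_neg_cancel, Complex.exp_zero, one_mul]

theorem eq_one_of_forall_circleMap_eq {f : ℂ → ℂ} {r s : ℝ} (hr : 0 < r) (hs : 0 < s)
    (hrot : ∀ θ : ℝ, f (circleMap 0 r θ) = Complex.exp (s * θ * Complex.I) * f (circleMap 0 r 0))
    (hf0 : f (circleMap 0 r 0) ≠ 0) (hinj : InjOn f (sphere 0 r)) : s = 1 := by
  obtain ⟨n, hn⟩ : ∃ n : ℤ, s = n := by
    have h := hrot (2 * Real.pi)
    rw [(periodic_circleMap 0 r).eq] at h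
    obtain ⟨n, hn⟩ :=
      Complex.exp_eq_one_iff.1 (mul_right_cancel₀ hf0 (h.symm.trans (one_mul _).symm))
    refine ⟨n, Complex.ofReal_injective ?_⟩
    have hπ : (2 * Real.pi * Complex.I : ℂ) ≠ 0 := by simp [Real.pi_ne_zero]
    push_cast at hn ⊢
    exact mul_right_cancel₀ hπ (by linear_combination hn)
  by_contra hs1
  have hs1' : 1 < s := by
    rw [hn] at hs hs1 ⊢
    have : (0 : ℤ) < n := by exact_mod_cast hs
    have : n ≠ 1 := fun h => hs1 (by simp [h])
    exact_mod_cast (show (1 : ℤ) < n by omega)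
  have hmem := circleMap_mem_sphere 0 hr.le
  have heq := hinj (hmem (2 * Real.pi / s)) (hmem 0) (by
    rw [hrot, show (s : ℂ) * ((2 * Real.pi / s : ℝ) : ℂ) * Complex.I = 2 * Real.pi * Complex.I by
      push_cast; field_simp [Complex.ofReal_ne_zero.2 hs.ne'], Complex.exp_two_pi_mul_I, one_mul])
  have hpos : 0 < 2 * Real.pi / s := by positivity
  have := eq_of_circleMap_eq hr.ne' (by
    rw [sub_zero, abs_of_pos hpos, div_lt_iff₀ hs]; nlinarith [Real.pi_pos]) heq
  exact hpos.ne' this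

theorem not_tendsto_norm_edges_one {R₁ R₂ : ℝ} (hR₁ : 1 < R₁) {f : ℂ → ℂ}
    (hf : DifferentiableOn ℂ f (annulus 1 R₁)) (hmaps : MapsTo f (annulus 1 R₁) (annulus 1 R₂)) :
    ¬Tendsto (‖f ·‖) (innerEdge 1 ⊔ outerEdge R₁) (𝓝 1) := by
  intro h
  obtain ⟨r, hr1, hrR⟩ := exists_between hR₁
  have hr : (r : ℂ) ∈ annulus 1 R₁ :=
    sphere_subset_annulus hr1 hrR (by simp [abs_of_pos (one_pos.trans hr1)])
  exact (norm_le_of_eventually_norm_lt hf (fun c hc => h.eventually_lt_const hc) _ hr).not_gt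
    (hmaps hr).1

theorem eq_of_bijOn_of_tendsto_edges {R₁ R₂ : ℝ} (hR₁ : 1 < R₁) (hR₂ : 1 < R₂) {f : ℂ → ℂ}
    (hf : DifferentiableOn ℂ f (annulus 1 R₁)) (hbij : BijOn f (annulus 1 R₁) (annulus 1 R₂))
    (hin : Tendsto (‖f ·‖) (innerEdge 1) (𝓝 1)) (hout : Tendsto (‖f ·‖) (outerEdge R₁) (𝓝 R₂)) :
    R₁ = R₂ := by
  have hlogR₁ : 0 < Real.log R₁ := Real.log_pos hR₁
  set s := Real.log R₂ / Real.log R₁ with hs_def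
  have hs : 0 < s := div_pos (Real.log_pos hR₂) hlogR₁
  have hf0 : ∀ z ∈ annulus 1 R₁, f z ≠ 0 := fun z hz =>
    ne_zero_of_mem_annulus zero_le_one (hbij.mapsTo hz)
  have hlog : ∀ z ∈ annulus 1 R₁, Real.log ‖f z‖ = s * Real.log ‖z‖ := fun z hz => by
    have := le_antisymm (log_norm_mul_log_le hR₁ hf hbij.mapsTo hR₂ hin z hz)
      (log_mul_log_norm_le hR₁ hf hbij.mapsTo hR₂ hout z hz)
    rw [hs_def, div_mul_eq_mul_div,
      eq_div_iff hlogR₁.ne']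
    linarith
  have hderiv : ∀ z ∈ annulus 1 R₁, z * deriv f z = s * f z := fun z hz =>
    mul_deriv_eq_of_log_norm_eventuallyEq (hf.differentiableAt ((isOpen_annulus 1 R₁).mem_nhds hz))
      (hf0 z hz) (ne_zero_of_mem_annulus zero_le_one hz)
      (eventually_of_mem ((isOpen_annulus 1 R₁).mem_nhds hz) hlog)
  obtain ⟨r, hr1, hrR⟩ := exists_between hR₁
  have hsph : sphere 0 r ⊆ annulus 1 R₁ := sphere_subset_annulus hr1 hrR
  have hmem : ∀ θ, circleMap 0 r θ ∈ annulus 1 R₁ :=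
    fun θ => hsph (circleMap_mem_sphere 0 (by linarith) θ)
  have hs1 : s = 1 := eq_one_of_forall_circleMap_eq (by linarith) hs
    (circleMap_eq_of_mul_deriv_eq
      (fun θ => hf.differentiableAt ((isOpen_annulus 1 R₁).mem_nhds (hmem θ)))
      (fun θ => hderiv _ (hmem θ)))
    (hf0 _ (hmem 0)) (hbij.injOn.mono hsph)
  rw [hs_def, div_eq_one_iff_eq hlogR₁.ne'] at hs1
  exact Real.log_injOn_pos (mem_Ioi.2 (by linarith)) (mem_Ioi.2 (by linarith)) hs1.symm

/-- **Conformal rigidity of round annuli.**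
Let `A₁ = {z : ℂ | 1 < ‖z‖ < R₁}` and `A₂ = {z : ℂ | 1 < ‖z‖ < R₂}` with `R₁, R₂ > 1`.
If some holomorphic map (differentiable at every point of `A₁`) maps `A₁` bijectively
onto `A₂`, then `R₁ = R₂`. -/
theorem round_annuli_conformally_equivalent_iff
    (R₁ R₂ : ℝ) (hR₁ : 1 < R₁) (hR₂ : 1 < R₂) (f : ℂ → ℂ)
    (hf : ∀ z ∈ {z : ℂ | 1 < ‖z‖ ∧ ‖z‖ < R₁}, DifferentiableAt ℂ f z)
    (hbij : Set.BijOn f {z : ℂ | 1 < ‖z‖ ∧ ‖z‖ < R₁} {z : ℂ | 1 < ‖z‖ ∧ ‖z‖ < R₂}) :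
    R₁ = R₂ := by
  have hR₂0 : 0 < R₂ := one_pos.trans hR₂
  have hf' : DifferentiableOn ℂ f (annulus 1 R₁) := fun z hz => (hf z hz).differentiableWithinAt
  set g : ℂ → ℂ := fun z => (R₂ : ℂ) / f z
  have hg : DifferentiableOn ℂ g (annulus 1 R₁) := (differentiableOn_const _).div hf'
    fun z hz => ne_zero_of_mem_annulus zero_le_one (hbij.mapsTo hz)
  have hgbij : BijOn g (annulus 1 R₁) (annulus 1 R₂) := (bijOn_div_annulus R₂).comp hbij
  have hflip := fun {l : Filter ℂ} {x : ℝ} (hx : x ≠ 0) (h : Tendsto (‖f ·‖) l (𝓝 x)) =>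
    tendsto_norm_ofReal_div hR₂0.le hx h
  obtain ⟨hin | hin, hout | hout⟩ := tendsto_norm_edges_of_bijOn hR₁ hR₂ hf' hbij
  · exact absurd (hin.sup hout) (not_tendsto_norm_edges_one hR₁ hf' hbij.mapsTo)
  · exact eq_of_bijOn_of_tendsto_edges hR₁ hR₂ hf' hbij hin hout
  · exact eq_of_bijOn_of_tendsto_edges hR₁ hR₂ hg hgbij
      (by simpa [g, hR₂0.ne'] using hflip hR₂0.ne' hin) (by simpa [g] using hflip one_ne_zero hout)
  · refine absurd ?_ (not_tendsto_norm_edges_one hR₁ hg hgbij.mapsTo)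
    simpa [g, hR₂0.ne'] using (hflip hR₂0.ne' hin).sup (hflip hR₂0.ne' hout)
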